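/- arXiv:1406.1970 — 2 statements merged into one kernel-verified Lean document; each statement's English description precedes it below -/
import Mathlib

section
/- Let X be a compact Hausdorff topological space, T : X → X a continuous map, n ≥ 1 a natural number, and x ∈ X. Then the closure of the forward orbit of x under T equals the union over i = 0, 1, …, n−1 of the images under T^i of the closure of the forward orbit of x under T^n; that is, cl({T^k(x) : k ≥ 0}) = ⋃_{i=0}^{n−1} T^i( cl({T^{nk}(x) : k ≥ 0}) ). -/
/-- The `d`-dimensional torus `ℝ^d / ℤ^d`, realized as `(ℝ/ℤ)^d`. -/
abbrev Torus (d : ℕ) := Fin d → AddCircle (1 : ℝ)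

/-- The natural projection `π : ℝ^d → 𝕋^d`. -/
noncomputable def torusProj {d : ℕ} (x : Fin d → ℝ) : Torus d :=
  fun i => (x i : AddCircle (1 : ℝ))

/-- The toral map induced by an integer matrix `A`. -/
noncomputable def toralMap {d : ℕ} (A : Matrix (Fin d) (Fin d) ℤ) : Torus d → Torus d :=
  fun x i => ∑ j, A i j • x j

/-- `A` induces a toral automorphism iff `det A = ±1`. -/
def IsToralAuto {d : ℕ} (A : Matrix (Fin d) (Fin d) ℤ) : Prop := IsUnit A.det

/-- Hyperbolicity: no (complex) eigenvalue of `A` has modulus 1. -/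
def IsHyperbolic {d : ℕ} (A : Matrix (Fin d) (Fin d) ℤ) : Prop :=
  ∀ μ ∈ spectrum ℂ (A.map ((↑) : ℤ → ℂ)), ‖μ‖ ≠ 1

/-- All eigenvalues of `A` are positive real numbers. -/
def HasPosEigenvalues {d : ℕ} (A : Matrix (Fin d) (Fin d) ℤ) : Prop :=
  ∀ μ ∈ spectrum ℂ (A.map ((↑) : ℤ → ℂ)), 0 < μ.re ∧ μ.im = 0

/-- The contracting space `E_A⁻ ⊆ ℝ^d`: real points of the sum of the generalized
eigenspaces of `A` for eigenvalues of modulus `< 1`. -/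
noncomputable def contracting {d : ℕ} (A : Matrix (Fin d) (Fin d) ℤ) : Set (Fin d → ℝ) :=
  {v | (fun i => (v i : ℂ)) ∈
    ⨆ (μ : ℂ) (_ : ‖μ‖ < 1),
      Module.End.maxGenEigenspace
        (Matrix.toLin' (A.map ((↑) : ℤ → ℂ)) : Module.End ℂ (Fin d → ℂ)) μ}

/-- The expanding space `E_A⁺ ⊆ ℝ^d`: real points of the sum of the generalized
eigenspaces of `A` for eigenvalues of modulus `> 1`. -/
noncomputable def expanding {d : ℕ} (A : Matrix (Fin d) (Fin d) ℤ) : Set (Fin d → ℝ) :=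
  {v | (fun i => (v i : ℂ)) ∈
    ⨆ (μ : ℂ) (_ : 1 < ‖μ‖),
      Module.End.maxGenEigenspace
        (Matrix.toLin' (A.map ((↑) : ℤ → ℂ)) : Module.End ℂ (Fin d → ℂ)) μ}

/-- The forward orbit of `x` under `f`. -/
def forwardOrbit {X : Type*} (f : X → X) (x : X) : Set X :=
  Set.range fun n : ℕ => f^[n] x

/-- `D(f)`: the set of points with dense forward orbit. -/
def denseSet {X : Type*} [TopologicalSpace X] (f : X → X) : Set X :=
  {x | Dense (forwardOrbit f x)}

/-- `ND(f)`: the set of points with nondense forward orbit. -/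
def nondenseSet {X : Type*} [TopologicalSpace X] (f : X → X) : Set X :=
  {x | ¬ Dense (forwardOrbit f x)}

/-- The closure of the forward `T`-orbit of `x` is the union, over `0 ≤ i < n`, of the
images under `Tⁱ` of the closure of the forward `Tⁿ`-orbit of `x`. -/
theorem stmt_7 {X : Type*} [TopologicalSpace X] [CompactSpace X] [T2Space X]
    (T : X → X) (hT : Continuous T) (n : ℕ) (hn : 1 ≤ n) (x : X) :
    closure (forwardOrbit T x) =
      ⋃ i ∈ Finset.range n, T^[i] '' closure (forwardOrbit (T^[n]) x) := by
  have hdecomp : forwardOrbit T x = ⋃ i ∈ Finset.range n, T^[i] '' forwardOrbit (T^[n]) x := by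
    ext y
    simp only [forwardOrbit, Set.mem_iUnion, Set.mem_image, Set.mem_range,
      Finset.mem_range]
    constructor
    · rintro ⟨k, rfl⟩
      refine ⟨k % n, Nat.mod_lt _ hn, (T^[n])^[k / n] x, ⟨_, rfl⟩, ?_⟩
      rw [← Function.iterate_mul, ← Function.iterate_add_apply,
        Nat.mod_add_div]
    · rintro ⟨i, hi, _, ⟨q, rfl⟩, rfl⟩
      exact ⟨i + n * q, by rw [← Function.iterate_mul, Function.iterate_add_apply]⟩
  have hclim : ∀ i, closure (T^[i] '' forwardOrbit (T^[n]) x)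
      = T^[i] '' closure (forwardOrbit (T^[n]) x) := by
    intro i
    apply Set.Subset.antisymm
    · apply closure_minimal (Set.image_mono subset_closure)
      exact (isClosed_closure.isCompact.image (hT.iterate i)).isClosed
    · exact image_closure_subset_closure_image (hT.iterate i)
  rw [hdecomp, Finset.closure_biUnion]
  exact Set.iUnion₂_congr fun i _ => hclim i
end

section
/- Let e₁, …, e_k be linearly independent vectors in ℝ^d, let x₀, y₀ ∈ ℝ^d, and let c₁, …, c_k be positive real numbers. Define the open parallelepiped P = {x₀ + Σᵢ βᵢ eᵢ : 0 < βᵢ < 1 for all i} and the closed parallelepiped Q = {y₀ + Σᵢ αᵢ cᵢ eᵢ : 0 ≤ αᵢ ≤ 1 for all i}. If both y₀ ∈ P and y₀ + Σᵢ cᵢ eᵢ ∈ P, then Q ⊆ P. -/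
/-- **Lemma 2.5 (geometric form).** If both distinguished vertices of the closed
parallelepiped `Q` (spanned from `y₀` by the edges `cᵢ • eᵢ`) lie in the open
parallelepiped `P` (spanned from `x₀` by the edges `eᵢ`), then `Q ⊆ P`. -/
theorem stmt_14 {d k : ℕ} (e : Fin k → (Fin d → ℝ)) (he : LinearIndependent ℝ e)
    (x₀ y₀ : Fin d → ℝ) (c : Fin k → ℝ) (hc : ∀ i, 0 < c i)
    (hy₀ : y₀ ∈ {x | ∃ β : Fin k → ℝ, (∀ i, β i ∈ Set.Ioo (0:ℝ) 1) ∧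
      x = x₀ + ∑ i, β i • e i})
    (hy₁ : (y₀ + ∑ i, c i • e i) ∈ {x | ∃ β : Fin k → ℝ, (∀ i, β i ∈ Set.Ioo (0:ℝ) 1) ∧
      x = x₀ + ∑ i, β i • e i}) :
    {x | ∃ α : Fin k → ℝ, (∀ i, α i ∈ Set.Icc (0:ℝ) 1) ∧
        x = y₀ + ∑ i, α i • c i • e i} ⊆
      {x | ∃ β : Fin k → ℝ, (∀ i, β i ∈ Set.Ioo (0:ℝ) 1) ∧
        x = x₀ + ∑ i, β i • e i} := by
  obtain ⟨β₀, hβ₀, hb0⟩ := hy₀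
  obtain ⟨β₁, hβ₁, hb1⟩ := hy₁
  -- β₁ = β₀ + c by linear independence
  have key : ∀ i, β₁ i = β₀ i + c i := by
    have h : ∑ i, β₁ i • e i = ∑ i, (β₀ i + c i) • e i := by
      have : x₀ + ∑ i, β₁ i • e i = x₀ + (∑ i, β₀ i • e i + ∑ i, c i • e i) := by
        rw [← hb1, hb0]; abel
      simpa [Finset.sum_add_distrib, add_smul] using add_left_cancel this
    intro i
    have hz : ∑ j, (β₁ j - (β₀ j + c j)) • e j = 0 := by
      simp [sub_smul, Finset.sum_sub_distrib, h]
    have := Fintype.linearIndependent_iff.mp he _ hz i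
    linarith [this]
  rintro x ⟨α, hα, rfl⟩
  refine ⟨fun i => β₀ i + α i * c i, fun i => ?_, ?_⟩
  · constructor
    · show (0:ℝ) < β₀ i + α i * c i
      have h2 : 0 ≤ α i * c i := mul_nonneg (hα i).1 (hc i).le
      linarith [(hβ₀ i).1]
    · show β₀ i + α i * c i < 1
      have h1 : β₀ i + α i * c i ≤ β₀ i + c i := by
        have : α i * c i ≤ c i := by
          nlinarith [(hα i).2, (hc i)]
        linarith
      calc β₀ i + α i * c i ≤ β₀ i + c i := h1
        _ = β₁ i := (key i).symm
        _ < 1 := (hβ₁ i).2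
  · rw [hb0]
    simp only [add_smul, Finset.sum_add_distrib, smul_smul]
    abel
end
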